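/- arXiv:1401.0855 — 4 statements merged into one kernel-verified Lean document; each statement's English description precedes it below -/
import Mathlib

section
/- Suppose δ ≥ 1 - 1/N with δ ∈ [0,1). For any vector v ∈ ℝ^N with v_n ≥ 0 for all n and Σ_n v_n = 1, there exists a sensor n and a vector v' ∈ ℝ^N with v'_m ≥ 0 for all m and Σ_m v'_m = 1 such that v_n = (1-δ) + δ·v'_n and v_m = δ·v'_m for all m ≠ n. -/
/-!
Some coordinate `v n` is at least the average `1 / N ≥ 1 - δ`. Taking `1 - δ` away from it and
rescaling by `δ⁻¹` leaves a point of the simplex; if `δ = 0`, then `v n = 1` and `v` is already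
the vertex `e_n`.
-/

open Finset

section

variable {𝕜 ι : Type*} [Field 𝕜] [LinearOrder 𝕜] [IsStrictOrderedRing 𝕜] [Fintype ι]

theorem exists_inv_card_le_of_mem_stdSimplex {v : ι → 𝕜} (hv : v ∈ stdSimplex 𝕜 ι) :
    ∃ n, (Fintype.card ι : 𝕜)⁻¹ ≤ v n := by
  have hne : (univ : Finset ι).Nonempty :=
    univ_nonempty_iff.mpr (not_isEmpty_iff.mp fun _ ↦ by simpa using hv.2)
  have hcard : (0 : 𝕜) < Fintype.card ι := by exact_mod_cast Fintype.card_pos_iff.mpr hne.to_type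
  obtain ⟨n, -, hn⟩ := exists_le_of_sum_le hne (f := fun _ ↦ (Fintype.card ι : 𝕜)⁻¹) (g := v) <| by
    simp [hv.2, hcard.ne']
  exact ⟨n, hn⟩

theorem eq_single_of_one_le_of_mem_stdSimplex [DecidableEq ι] {v : ι → 𝕜}
    (hv : v ∈ stdSimplex 𝕜 ι) {n : ι} (hn : 1 ≤ v n) : v = Pi.single n 1 := by
  have hvn : v n = 1 := le_antisymm (mem_Icc_of_mem_stdSimplex hv n).2 hn
  have hrest : ∑ m ∈ univ.erase n, v m = 0 := by
    have := add_sum_erase univ v (mem_univ n)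
    rw [hv.2, hvn] at this
    linarith
  ext m
  rcases eq_or_ne m n with rfl | hm
  · simp [hvn]
  · rw [Pi.single_eq_of_ne hm]
    exact (sum_eq_zero_iff_of_nonneg fun i _ ↦ hv.1 i).mp hrest m (mem_erase.mpr ⟨hm, mem_univ m⟩)

theorem exists_mem_stdSimplex_eq_smul_single_add_smul [DecidableEq ι] {δ : 𝕜} {v : ι → 𝕜}
    (hv : v ∈ stdSimplex 𝕜 ι) {n : ι} (hn : 1 - δ ≤ v n) :
    ∃ v' ∈ stdSimplex 𝕜 ι, v = (1 - δ) • Pi.single n 1 + δ • v' := by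
  have hδ : 0 ≤ δ := by linarith [(mem_Icc_of_mem_stdSimplex hv n).2]
  rcases hδ.eq_or_lt with rfl | hδ
  · refine ⟨v, hv, ?_⟩
    simpa using eq_single_of_one_le_of_mem_stdSimplex hv (by simpa using hn)
  refine ⟨δ⁻¹ • (v - (1 - δ) • Pi.single n 1), ⟨fun m ↦ ?_, ?_⟩, ?_⟩
  · refine mul_nonneg (inv_nonneg.mpr hδ.le) ?_
    rcases eq_or_ne m n with rfl | hm
    · simpa using hn
    · simpa [Pi.single_eq_of_ne hm] using hv.1 m
  · simp only [Pi.smul_apply, Pi.sub_apply, smul_eq_mul, ← mul_sum, sum_sub_distrib, hv.2]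
    simp [hδ.ne']
  · rw [smul_inv_smul₀ hδ.ne']
    abel

end

theorem simplex_decomposition_general (N : ℕ) (δ : ℝ)
    (hδN : δ ≥ 1 - 1 / N) (v : Fin N → ℝ) (hv0 : ∀ n, 0 ≤ v n) (hv1 : ∑ n, v n = 1) :
    ∃ (n : Fin N) (v' : Fin N → ℝ), (∀ m, 0 ≤ v' m) ∧ (∑ m, v' m = 1) ∧
      v n = (1 - δ) + δ * v' n ∧ ∀ m, m ≠ n → v m = δ * v' m := by
  have hv : v ∈ stdSimplex ℝ (Fin N) := ⟨hv0, hv1⟩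
  obtain ⟨n, hn⟩ := exists_inv_card_le_of_mem_stdSimplex hv
  rw [Fintype.card_fin] at hn
  have hδn : 1 - δ ≤ v n := by rw [one_div] at hδN; linarith
  obtain ⟨v', ⟨hv'0, hv'1⟩, hdecomp⟩ := exists_mem_stdSimplex_eq_smul_single_add_smul hv hδn
  refine ⟨n, v', hv'0, hv'1, ?_, fun m hm ↦ ?_⟩
  · simpa using congrFun hdecomp n
  · simpa [Pi.single_eq_of_ne hm] using congrFun hdecomp m

/-- if δ ≥ 1 - 1/N, every point of the standard simplex can be decomposed as
allocating the current slot to some sensor n plus δ times a feasible continuation vector. -/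
theorem simplex_decomposition (N : ℕ) (hN : 1 ≤ N) (δ : ℝ) (hδ0 : 0 ≤ δ) (hδ1 : δ < 1)
    (hδN : δ ≥ 1 - 1 / N) (v : Fin N → ℝ) (hv0 : ∀ n, 0 ≤ v n) (hv1 : ∑ n, v n = 1) :
    ∃ (n : Fin N) (v' : Fin N → ℝ), (∀ m, 0 ≤ v' m) ∧ (∑ m, v' m = 1) ∧
      v n = (1 - δ) + δ * v' n ∧ ∀ m, m ≠ n → v m = δ * v' m :=
  simplex_decomposition_general N δ hδN v hv0 hv1
end

section
/- Suppose δ ∈ [0,1) satisfies δ ≥ 1 - 1/N. Then for any target vector v in the standard simplex {v ∈ ℝ^N : v_n ≥ 0, Σ_n v_n = 1}, there exists an allocation s : ℕ → Fin N such that for every sensor n, (1-δ)·Σ_{t=1}^∞ δ^{t-1}·1(s(t)=n) = v_n. -/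
/-!
Serve greedily the sensor with the largest remaining deficit. After `T` slots the deficits
`R T n = v n - (1 - δ) Σ_{t<T} δ^t 1(s t = n)` are nonnegative and sum to `δ ^ T`, so the largest
one is at least `δ ^ T / N ≥ (1 - δ) δ ^ T`, which is exactly what slot `T` removes: the deficits
stay nonnegative. Hence `0 ≤ R T n ≤ δ ^ T → 0`, and the discounted rates converge to `v`.
-/

open Finset Filter Topology

namespace GreedyAllocation

variable {ι : Type*} [Fintype ι] [Nonempty ι]

noncomputable def argmax (w : ι → ℝ) : ι :=
  (Finite.exists_max w).choose

lemma le_argmax (w : ι → ℝ) (j : ι) : w j ≤ w (argmax w) :=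
  (Finite.exists_max w).choose_spec j

lemma sum_le_card_mul_argmax (w : ι → ℝ) :
    ∑ j, w j ≤ Fintype.card ι * w (argmax w) := by
  simpa using sum_le_sum fun j (_ : j ∈ univ) => le_argmax w j

variable [DecidableEq ι]

noncomputable def deficit (δ : ℝ) (v : ι → ℝ) : ℕ → ι → ℝ
  | 0 => v
  | T + 1 => fun n =>
      deficit δ v T n - (1 - δ) * (δ ^ T * if argmax (deficit δ v T) = n then 1 else 0)

noncomputable def schedule (δ : ℝ) (v : ι → ℝ) (T : ℕ) : ι :=
  argmax (deficit δ v T)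

lemma deficit_succ (δ : ℝ) (v : ι → ℝ) (T : ℕ) (n : ι) :
    deficit δ v (T + 1) n
      = deficit δ v T n - (1 - δ) * (δ ^ T * if schedule δ v T = n then 1 else 0) :=
  rfl

lemma sum_range_add_deficit (δ : ℝ) (v : ι → ℝ) (n : ι) (T : ℕ) :
    ∑ t ∈ range T, (1 - δ) * (δ ^ t * if schedule δ v t = n then 1 else 0)
      + deficit δ v T n = v n := by
  induction T with
  | zero => simp [deficit]
  | succ T ih =>
    rw [sum_range_succ, ← ih, deficit_succ]
    ring

lemma deficit_nonneg_and_sum_eq {δ : ℝ} (hδ0 : 0 ≤ δ)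
    (hδ : Fintype.card ι * (1 - δ) ≤ 1) {v : ι → ℝ} (hv0 : ∀ n, 0 ≤ v n) (hv1 : ∑ n, v n = 1)
    (T : ℕ) : (∀ n, 0 ≤ deficit δ v T n) ∧ ∑ n, deficit δ v T n = δ ^ T := by
  induction T with
  | zero => exact ⟨hv0, by simpa [deficit] using hv1⟩
  | succ T ih =>
    obtain ⟨hR0, hR1⟩ := ih
    have hcard : (0 : ℝ) < Fintype.card ι := by exact_mod_cast Fintype.card_pos
    have hmax : (1 - δ) * δ ^ T ≤ deficit δ v T (schedule δ v T) := by
      refine le_of_mul_le_mul_left ?_ hcard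
      calc Fintype.card ι * ((1 - δ) * δ ^ T) = (Fintype.card ι * (1 - δ)) * δ ^ T := by ring
        _ ≤ δ ^ T := mul_le_of_le_one_left (pow_nonneg hδ0 T) hδ
        _ = ∑ j, deficit δ v T j := hR1.symm
        _ ≤ Fintype.card ι * deficit δ v T (schedule δ v T) := sum_le_card_mul_argmax _
    refine ⟨fun n => ?_, ?_⟩
    · rw [deficit_succ]
      split_ifs with h
      · subst h; linarith
      · linarith [hR0 n]
    · simp only [deficit_succ, sum_sub_distrib, ← mul_sum, sum_ite_eq, mem_univ, if_true, hR1]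
      ring

lemma hasSum_discounted_schedule {δ : ℝ} (hδ0 : 0 ≤ δ) (hδ1 : δ < 1)
    (hδ : Fintype.card ι * (1 - δ) ≤ 1) {v : ι → ℝ} (hv0 : ∀ n, 0 ≤ v n) (hv1 : ∑ n, v n = 1)
    (n : ι) :
    HasSum (fun t => (1 - δ) * (δ ^ t * if schedule δ v t = n then 1 else 0)) (v n) := by
  have hR := deficit_nonneg_and_sum_eq hδ0 hδ hv0 hv1
  have hR_le (T : ℕ) : deficit δ v T n ≤ δ ^ T :=
    (hR T).2 ▸ single_le_sum (fun j _ => (hR T).1 j) (mem_univ n)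
  have hR_tendsto : Tendsto (fun T => deficit δ v T n) atTop (𝓝 0) :=
    squeeze_zero (fun T => (hR T).1 n) hR_le (tendsto_pow_atTop_nhds_zero_of_lt_one hδ0 hδ1)
  have hpartial : (fun T => ∑ t ∈ range T, (1 - δ) * (δ ^ t * if schedule δ v t = n then 1 else 0))
      = fun T => v n - deficit δ v T n :=
    funext fun T => eq_sub_of_add_eq (sum_range_add_deficit δ v n T)
  rw [hasSum_iff_tendsto_nat_of_nonneg (fun t => by positivity), hpartial]
  simpa using (tendsto_const_nhds (x := v n)).sub hR_tendsto

end GreedyAllocation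

open GreedyAllocation in
/-- if δ ≥ 1 - 1/N, every point of the standard simplex is achievable as the
vector of normalized weighted sum rates of some allocation. -/
theorem simplex_achievable (N : ℕ) (hN : 1 ≤ N) (δ : ℝ) (hδ0 : 0 ≤ δ) (hδ1 : δ < 1)
    (hδN : δ ≥ 1 - 1 / N) (v : Fin N → ℝ) (hv0 : ∀ n, 0 ≤ v n) (hv1 : ∑ n, v n = 1) :
    ∃ s : ℕ → Fin N, ∀ n,
      (1 - δ) * ∑' t : ℕ, δ ^ t * (if s t = n then (1 : ℝ) else 0) = v n := by
  have : Nonempty (Fin N) := ⟨⟨0, hN⟩⟩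
  have hcard : Fintype.card (Fin N) * (1 - δ) ≤ 1 := by
    have hNpos : (0 : ℝ) < N := by exact_mod_cast hN
    rw [Fintype.card_fin, ← le_div_iff₀' hNpos]
    linarith
  refine ⟨schedule δ v, fun n => ?_⟩
  rw [← tsum_mul_left]
  exact (hasSum_discounted_schedule hδ0 hδ1 hcard hv0 hv1 n).tsum_eq
end

section
/- If δ ∈ [0, 1 - 1/N), then the set of achievable normalized weighted sum rate vectors {v : v_n = (1-δ)·Σ_{t=1}^∞ δ^{t-1}·1(s(t)=n) for some allocation s : ℕ → Fin N} is a strict subset of the standard simplex. -/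
/-!
Every allocation yields a point of the simplex, since the discounted indicator weights of the
sensors add up to the geometric series `(1 - δ) ∑ δ ^ t = 1`. Conversely, the sensor served in
the first slot already collects weight `1 - δ`, which exceeds `1 / N` when `δ < 1 - 1 / N`;
so the barycentre `(1 / N, …, 1 / N)` of the simplex is not achievable.
-/

open Finset

section DiscountedShare

variable {α : Type*} [DecidableEq α] {δ : ℝ}

noncomputable def discountedShare (δ : ℝ) (s : ℕ → α) (a : α) : ℝ :=
  (1 - δ) * ∑' t : ℕ, δ ^ t * (if s t = a then (1 : ℝ) else 0)

lemma summable_pow_mul_ite_eq (hδ0 : 0 ≤ δ) (hδ1 : δ < 1) (s : ℕ → α) (a : α) :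
    Summable fun t : ℕ => δ ^ t * (if s t = a then (1 : ℝ) else 0) := by
  refine (summable_geometric_of_lt_one hδ0 hδ1).of_nonneg_of_le (fun t => by positivity)
    fun t => ?_
  split_ifs <;> simp [pow_nonneg hδ0]

lemma discountedShare_nonneg (hδ0 : 0 ≤ δ) (hδ1 : δ < 1) (s : ℕ → α) (a : α) :
    0 ≤ discountedShare δ s a :=
  mul_nonneg (by linarith) (tsum_nonneg fun t => by positivity)

lemma sum_discountedShare [Fintype α] (hδ0 : 0 ≤ δ) (hδ1 : δ < 1) (s : ℕ → α) :
    ∑ a, discountedShare δ s a = 1 := by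
  have hrow (t : ℕ) : ∑ a, δ ^ t * (if s t = a then (1 : ℝ) else 0) = δ ^ t := by
    simp
  unfold discountedShare
  rw [← mul_sum, ← Summable.tsum_finsetSum fun a _ => summable_pow_mul_ite_eq hδ0 hδ1 s a,
    tsum_congr hrow, tsum_geometric_of_lt_one hδ0 hδ1, mul_inv_cancel₀ (by linarith)]

lemma one_sub_le_discountedShare_apply_zero (hδ0 : 0 ≤ δ) (hδ1 : δ < 1) (s : ℕ → α) :
    1 - δ ≤ discountedShare δ s (s 0) := by
  have hfirst : (1 : ℝ) ≤ ∑' t : ℕ, δ ^ t * (if s t = s 0 then (1 : ℝ) else 0) := by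
    simpa using (summable_pow_mul_ite_eq hδ0 hδ1 s (s 0)).le_tsum 0 fun t _ => by positivity
  calc 1 - δ = (1 - δ) * 1 := (mul_one _).symm
    _ ≤ discountedShare δ s (s 0) := mul_le_mul_of_nonneg_left hfirst (by linarith)

end DiscountedShare

/-- if δ < 1 - 1/N, the achievable set of normalized weighted sum rate vectors
is a strict subset of the standard simplex. -/
theorem achievable_ssubset (N : ℕ) (hN : 2 ≤ N) (δ : ℝ) (hδ0 : 0 ≤ δ) (hδ1 : δ < 1 - 1 / N) :
    { v : Fin N → ℝ | ∃ s : ℕ → Fin N, ∀ n,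
        v n = (1 - δ) * ∑' t : ℕ, δ ^ t * (if s t = n then (1 : ℝ) else 0) }
      ⊂ { v : Fin N → ℝ | (∀ n, 0 ≤ v n) ∧ ∑ n, v n = 1 } := by
  have hNpos : (0 : ℝ) < N := Nat.cast_pos.mpr (by omega)
  have hδ1' : δ < 1 := hδ1.trans_le (sub_le_self 1 (by positivity))
  refine ⟨?_, fun hsimplex => ?_⟩
  · rintro v ⟨s, hs⟩
    obtain rfl : v = discountedShare δ s := funext hs
    exact ⟨discountedShare_nonneg hδ0 hδ1' s, sum_discountedShare hδ0 hδ1' s⟩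
  · obtain ⟨s, hs⟩ := hsimplex (a := fun _ => 1 / N)
      ⟨fun _ => by positivity, by simp [hNpos.ne']⟩
    have := one_sub_le_discountedShare_apply_zero hδ0 hδ1' s
    rw [discountedShare, ← hs] at this
    linarith
end

section
/- Let δ ∈ [0,1) with δ ≥ 1 - 1/N and let v⁰ be in the standard simplex of ℝ^N. Define recursively: at each step t ≥ 1 choose n_t maximizing v^{t-1}_n, and set v^t_{n_t} = (v^{t-1}_{n_t} - 1 + δ)/δ, v^t_m = v^{t-1}_m/δ for m ≠ n_t. Then v^t remains in the standard simplex for all t, and the induced allocation s(t) = n_t satisfies (1-δ)·Σ_{t=1}^∞ δ^{t-1}·1(s(t)=n) = v⁰_n for every n. -/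
/-!
Writing `e_i` for the `i`-th unit vector, the greedy step is `v ↦ (v - (1 - δ) e_i) / δ`, so
`v = (1 - δ) e_i + δ v'`. Unrolling this identity expresses `v⁰` as the partial discounted sum
of the allocation plus the remainder `δ^T v^T`, which tends to `0` as long as `v^T` stays in the
simplex. It does: the sum is preserved by the affine step, and the largest coordinate is at least
`1 / N`, hence at least `1 - δ`, so it stays nonnegative after subtracting `1 - δ`.
-/

open Finset Filter Topology

theorem hasSum_pow_mul_of_eq_add_mul_succ {δ C : ℝ} {a u : ℕ → ℝ} (hδ0 : 0 ≤ δ) (hδ1 : δ < 1)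
    (ha : ∀ t, 0 ≤ a t) (hu : ∀ t, |u t| ≤ C) (hrec : ∀ t, u t = a t + δ * u (t + 1)) :
    HasSum (fun t => δ ^ t * a t) (u 0) := by
  have hpartial : ∀ T, ∑ t ∈ range T, δ ^ t * a t = u 0 - δ ^ T * u T := by
    intro T
    induction T with
    | zero => simp
    | succ T ih => rw [sum_range_succ, ih, hrec T]; ring
  have hremainder : Tendsto (fun T => δ ^ T * u T) atTop (𝓝 0) := by
    refine squeeze_zero_norm (fun T => ?_)
      (by simpa using (tendsto_pow_atTop_nhds_zero_of_lt_one hδ0 hδ1).mul_const C)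
    rw [norm_mul, norm_pow, Real.norm_of_nonneg hδ0, Real.norm_eq_abs]
    exact mul_le_mul_of_nonneg_left (hu T) (pow_nonneg hδ0 T)
  rw [hasSum_iff_tendsto_nat_of_nonneg (fun t => mul_nonneg (pow_nonneg hδ0 t) (ha t)),
    funext hpartial]
  simpa using tendsto_const_nhds.sub hremainder

section GreedyStep

variable {ι : Type*} [DecidableEq ι]

noncomputable def greedyStep (δ : ℝ) (x : ι → ℝ) (i : ι) : ι → ℝ :=
  fun m => if m = i then (x i - 1 + δ) / δ else x m / δ

theorem greedyStep_eq_sub_div (δ : ℝ) (x : ι → ℝ) (i : ι) :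
    greedyStep δ x i = fun m => (x m - (1 - δ) * (if m = i then 1 else 0)) / δ := by
  ext m
  by_cases h : m = i <;> simp [greedyStep, h]; ring

theorem eq_add_mul_greedyStep {δ : ℝ} (hδ : δ ≠ 0) (x : ι → ℝ) (i m : ι) :
    x m = (1 - δ) * (if i = m then 1 else 0) + δ * greedyStep δ x i m := by
  rw [greedyStep_eq_sub_div, eq_comm]
  by_cases h : m = i
  · simp [h, mul_div_cancel₀ _ hδ]
  · simp [h, Ne.symm h, mul_div_cancel₀ _ hδ]

theorem sum_greedyStep [Fintype ι] {δ : ℝ} (hδ : δ ≠ 0) {x : ι → ℝ} (hx : ∑ m, x m = 1)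
    (i : ι) : ∑ m, greedyStep δ x i m = 1 := by
  rw [greedyStep_eq_sub_div, ← sum_div, sum_sub_distrib, ← mul_sum, sum_ite_eq' univ i, hx]
  simp [hδ]

theorem greedyStep_mem_stdSimplex [Fintype ι] {δ : ℝ} (hδ : 0 < δ) {x : ι → ℝ}
    (hx : x ∈ stdSimplex ℝ ι) {i : ι} (hi : 1 - δ ≤ x i) : greedyStep δ x i ∈ stdSimplex ℝ ι := by
  refine ⟨fun m => ?_, sum_greedyStep hδ.ne' hx.2 i⟩
  unfold greedyStep
  split_ifs
  · exact div_nonneg (by linarith) hδ.le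
  · exact div_nonneg (hx.1 m) hδ.le

end GreedyStep

theorem one_div_card_le_of_forall_le {ι : Type*} [Fintype ι] {x : ι → ℝ} (hx : ∑ m, x m = 1)
    {i : ι} (hi : ∀ m, x m ≤ x i) : 1 / (Fintype.card ι : ℝ) ≤ x i := by
  have hcard : (0 : ℝ) < Fintype.card ι := by exact_mod_cast Fintype.card_pos_iff.mpr ⟨i⟩
  rw [div_le_iff₀ hcard]
  calc (1 : ℝ) = ∑ m, x m := hx.symm
    _ ≤ ∑ _m : ι, x i := sum_le_sum fun m _ => hi m
    _ = x i * Fintype.card ι := by rw [sum_const, card_univ, nsmul_eq_mul, mul_comm]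

theorem greedy_achieves_target_general (N : ℕ) (δ : ℝ) (hδ0 : 0 < δ) (hδ1 : δ < 1)
    (hδN : δ ≥ 1 - 1 / N) (v0 : Fin N → ℝ) (hv0 : ∀ n, 0 ≤ v0 n) (hv1 : ∑ n, v0 n = 1)
    (nt : ℕ → Fin N) (v : ℕ → Fin N → ℝ)
    (hinit : v 0 = v0)
    (hargmax : ∀ t m, v t m ≤ v t (nt t))
    (hstep : ∀ t m, v (t + 1) m =
      if m = nt t then (v t (nt t) - 1 + δ) / δ else v t m / δ) :
    (∀ t, (∀ n, 0 ≤ v t n) ∧ ∑ n, v t n = 1) ∧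
    (∀ n, (1 - δ) * ∑' t : ℕ, δ ^ t * (if nt t = n then (1 : ℝ) else 0) = v0 n) := by
  have hgreedy : ∀ t, v (t + 1) = greedyStep δ (v t) (nt t) := fun t => funext (hstep t)
  have hsimplex : ∀ t, v t ∈ stdSimplex ℝ (Fin N) := by
    intro t
    induction t with
    | zero => exact hinit ▸ ⟨hv0, hv1⟩
    | succ t ih =>
      have hmax := one_div_card_le_of_forall_le ih.2 (hargmax t)
      rw [Fintype.card_fin] at hmax
      exact hgreedy t ▸ greedyStep_mem_stdSimplex hδ0 ih (by linarith)
  refine ⟨hsimplex, fun n => ?_⟩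
  have hbound : ∀ t, |v t n| ≤ 1 := fun t => by
    rw [abs_of_nonneg ((hsimplex t).1 n)]
    exact (stdSimplex_subset_Icc ℝ (hsimplex t)).2 n
  have hsum := hasSum_pow_mul_of_eq_add_mul_succ (u := fun t => v t n) hδ0.le hδ1
    (fun t => mul_nonneg (sub_nonneg.mpr hδ1.le) (by positivity)) hbound
    (fun t => hgreedy t ▸ eq_add_mul_greedyStep hδ0.ne' (v t) (nt t) n)
  rw [← tsum_mul_left, ← hinit, ← hsum.tsum_eq]
  exact tsum_congr fun t => by ring

/-- the greedy (largest-remaining-target) decomposition, run forever, keeps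
the state in the simplex and realizes exactly the target normalized weighted sum rates. -/
theorem greedy_achieves_target (N : ℕ) (hN : 1 ≤ N) (δ : ℝ) (hδ0 : 0 < δ) (hδ1 : δ < 1)
    (hδN : δ ≥ 1 - 1 / N) (v0 : Fin N → ℝ) (hv0 : ∀ n, 0 ≤ v0 n) (hv1 : ∑ n, v0 n = 1)
    (nt : ℕ → Fin N) (v : ℕ → Fin N → ℝ)
    (hinit : v 0 = v0)
    (hargmax : ∀ t m, v t m ≤ v t (nt t))
    (hstep : ∀ t m, v (t + 1) m =
      if m = nt t then (v t (nt t) - 1 + δ) / δ else v t m / δ) :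
    (∀ t, (∀ n, 0 ≤ v t n) ∧ ∑ n, v t n = 1) ∧
    (∀ n, (1 - δ) * ∑' t : ℕ, δ ^ t * (if nt t = n then (1 : ℝ) else 0) = v0 n) :=
  greedy_achieves_target_general N δ hδ0 hδ1 hδN v0 hv0 hv1 nt v hinit hargmax hstep
end
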